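/- arXiv:1107.3977 — 6 statements merged into one kernel-verified Lean document; each statement's English description precedes it below -/
import Mathlib

section
/- Let G be a connected graph with a 2-join having split (X1, X2, A1, B1, A2, B2), let (T, r) be a BFS-tree of G with root r ∈ X2, and suppose T contains no edge between A1 and A2. Let a be any vertex of A1 and let P be the path in T from r to a. Then P contains exactly one vertex of B1 and exactly one vertex of B2, and these two vertices are adjacent consecutive vertices of P with the B2-vertex closer to r. -/
open SimpleGraph Set

/-- `(X1, X2, A1, B1, A2, B2)` is a split of a 2-join of `G`. -/
def IsTwoJoinSplit {V : Type*} (G : SimpleGraph V) (X1 X2 A1 B1 A2 B2 : Set V) : Prop :=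
  X1 ∪ X2 = Set.univ ∧ Disjoint X1 X2 ∧
  A1 ⊆ X1 ∧ B1 ⊆ X1 ∧ A2 ⊆ X2 ∧ B2 ⊆ X2 ∧
  Disjoint A1 B1 ∧ Disjoint A2 B2 ∧
  A1.Nonempty ∧ B1.Nonempty ∧ A2.Nonempty ∧ B2.Nonempty ∧
  (∀ a1 ∈ A1, ∀ a2 ∈ A2, G.Adj a1 a2) ∧
  (∀ b1 ∈ B1, ∀ b2 ∈ B2, G.Adj b1 b2) ∧
  (∀ x ∈ X1, ∀ y ∈ X2, G.Adj x y → (x ∈ A1 ∧ y ∈ A2) ∨ (x ∈ B1 ∧ y ∈ B2)) ∧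
  3 ≤ X1.ncard ∧ 3 ≤ X2.ncard

/-- `(X1, X2)` is a 2-join of `G`. -/
def IsTwoJoin {V : Type*} (G : SimpleGraph V) (X1 X2 : Set V) : Prop :=
  ∃ A1 B1 A2 B2, IsTwoJoinSplit G X1 X2 A1 B1 A2 B2

/-- `(a1, a2, b1, b2)` is a proper 4-tuple of `G`. -/
def ProperQuad {V : Type*} (G : SimpleGraph V) (a1 a2 b1 b2 : V) : Prop :=
  a1 ≠ a2 ∧ a1 ≠ b1 ∧ a1 ≠ b2 ∧ a2 ≠ b1 ∧ a2 ≠ b2 ∧ b1 ≠ b2 ∧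
  G.Adj a1 a2 ∧ G.Adj b1 b2 ∧ ¬ G.Adj a1 b2 ∧ ¬ G.Adj b1 a2

/-- `G[X]` is a chordless path with one end in `A`, the other end in `B`,
and interior in `X \ (A ∪ B)`. -/
def IsPathSide {V : Type*} (G : SimpleGraph V) (X A B : Set V) : Prop :=
  ∃ (k : ℕ) (f : Fin (k+1) → V), Function.Injective f ∧
    X = Set.range f ∧ f 0 ∈ A ∧ f (Fin.last k) ∈ B ∧
    (∀ i : Fin (k+1), i ≠ 0 → i ≠ Fin.last k → f i ∉ A ∪ B) ∧
    (∀ i j : Fin (k+1), G.Adj (f i) (f j) ↔ ((i : ℕ) + 1 = (j : ℕ) ∨ (j : ℕ) + 1 = (i : ℕ)))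

/-- `(X1, X2)` is a path 2-join of `G`: it has a split one of whose sides is a path-side. -/
def IsPathTwoJoin {V : Type*} (G : SimpleGraph V) (X1 X2 : Set V) : Prop :=
  ∃ A1 B1 A2 B2, IsTwoJoinSplit G X1 X2 A1 B1 A2 B2 ∧
    (IsPathSide G X1 A1 B1 ∨ IsPathSide G X2 A2 B2)

/-- A non-path 2-join is a 2-join that is not a path 2-join. -/
def IsNonPathTwoJoin {V : Type*} (G : SimpleGraph V) (X1 X2 : Set V) : Prop :=
  IsTwoJoin G X1 X2 ∧ ¬ IsPathTwoJoin G X1 X2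

/-- `T` is a spanning tree of `G`. -/
def IsSpanningTree {V : Type*} (G T : SimpleGraph V) : Prop := T ≤ G ∧ T.IsTree

/-- `(T, r)` is a BFS-tree of `G`: a spanning tree in which distances from `r`
agree with distances in `G`. -/
def IsBFSTree {V : Type*} (G T : SimpleGraph V) (r : V) : Prop :=
  IsSpanningTree G T ∧ ∀ v, T.dist r v = G.dist r v

/-! Every vertex at position `i` of the tree path `P` has `G`-distance `i` from `r`, so a `G`-edge
between two vertices of `P` joins positions at most one apart. `P` leaves `X2` and enters `X1`, and
since `T` has no `A1`–`A2` edge, each step of `P` from `X2` to `X1` is a `B2`–`B1` edge. All of `B1`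
is adjacent to all of `B2`, so every `B`-vertex of `P` is within one step of both ends of the first
such crossing; this pins down the `B1`- and `B2`-vertices of `P` and makes the last visit of `X2`
the same crossing. -/

namespace SimpleGraph

lemma Adj.dist_le_dist_add_one {V : Type*} {G : SimpleGraph V} {x y : V} (h : G.Adj x y)
    (u : V) : G.dist u y ≤ G.dist u x + 1 := by
  rcases h.diff_dist_adj (u := u) with h | h | h <;> omega

lemma IsTree.length_eq_dist_of_isPath {V : Type*} {T : SimpleGraph V} (hT : T.IsTree)
    {u v : V} {p : T.Walk u v} (hp : p.IsPath) : p.length = T.dist u v := by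
  obtain ⟨q, hq, hlen⟩ := hT.connected.exists_path_of_dist u v
  rw [(hT.existsUnique_path u v).unique hp hq, hlen]

lemma IsTree.dist_getVert_of_isPath {V : Type*} {T : SimpleGraph V} (hT : T.IsTree)
    {u v : V} {p : T.Walk u v} (hp : p.IsPath) {i : ℕ} (hi : i ≤ p.length) :
    T.dist u (p.getVert i) = i := by
  rw [← hT.length_eq_dist_of_isPath (hp.take i), Walk.take_length]
  omega

end SimpleGraph

section BFSTree

variable {V : Type*} {G T : SimpleGraph V} {r v : V}

lemma IsBFSTree.dist_getVert (hT : IsBFSTree G T r) {p : T.Walk r v} (hp : p.IsPath) {i : ℕ}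
    (hi : i ≤ p.length) : G.dist r (p.getVert i) = i := by
  rw [← hT.2, hT.1.2.dist_getVert_of_isPath hp hi]

lemma IsBFSTree.le_succ_of_adj_getVert (hT : IsBFSTree G T r) {p : T.Walk r v} (hp : p.IsPath)
    {i k : ℕ} (hi : i ≤ p.length) (hk : k ≤ p.length) (h : G.Adj (p.getVert i) (p.getVert k)) :
    k ≤ i + 1 := by
  simpa only [hT.dist_getVert hp hi, hT.dist_getVert hp hk] using h.dist_le_dist_add_one r

end BFSTree

section TwoJoin

variable {V : Type*} {G : SimpleGraph V} {X1 X2 A1 B1 A2 B2 : Set V}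

lemma IsTwoJoinSplit.mem_X1_iff (h : IsTwoJoinSplit G X1 X2 A1 B1 A2 B2) {x : V} :
    x ∈ X1 ↔ x ∉ X2 := by
  obtain ⟨hunion, hdisj, -⟩ := h
  refine ⟨fun hx => hdisj.notMem_of_mem_left hx, fun hx => ?_⟩
  have : x ∈ X1 ∪ X2 := hunion ▸ Set.mem_univ x
  exact this.resolve_right hx

lemma IsTwoJoinSplit.mem_B2_and_mem_B1_of_adj (h : IsTwoJoinSplit G X1 X2 A1 B1 A2 B2) {x y : V}
    (hx : x ∈ X2) (hy : y ∈ X1) (hxy : G.Adj x y) (hA : ¬ (y ∈ A1 ∧ x ∈ A2)) :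
    x ∈ B2 ∧ y ∈ B1 := by
  obtain ⟨-, -, -, -, -, -, -, -, -, -, -, -, -, -, hcross, -, -⟩ := h
  exact (hcross y hy x hx hxy.symm).resolve_left hA |>.symm

end TwoJoin

section Crossing

variable {α : Type*} (f : ℕ → α) (S : Set α) {n : ℕ}

lemma exists_first_exit (h0 : f 0 ∈ S) (hn : f n ∉ S) :
    ∃ j < n, (∀ k ≤ j, f k ∈ S) ∧ f (j + 1) ∉ S := by
  classical
  obtain ⟨n, rfl⟩ : ∃ m, n = m + 1 :=
    Nat.exists_eq_add_one.mpr (Nat.pos_of_ne_zero fun h => hn (h ▸ h0))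
  have hex : ∃ j, f (j + 1) ∉ S := ⟨n, hn⟩
  refine ⟨Nat.find hex, Nat.lt_succ_of_le (Nat.find_le hn), fun k hk => ?_, Nat.find_spec hex⟩
  cases k with
  | zero => exact h0
  | succ k => exact not_not.mp (Nat.find_min hex (by omega))

lemma exists_last_mem (h0 : f 0 ∈ S) (hn : f n ∉ S) :
    ∃ m < n, f m ∈ S ∧ ∀ k, m < k → k ≤ n → f k ∉ S := by
  classical
  have hm : f (Nat.findGreatest (f · ∈ S) n) ∈ S :=
    Nat.findGreatest_spec (P := (f · ∈ S)) (Nat.zero_le n) h0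
  exact ⟨_, lt_of_le_of_ne (Nat.findGreatest_le n) fun h => hn (h ▸ hm), hm,
    fun k hk hkn => Nat.findGreatest_is_greatest hk hkn⟩

lemma exists_unique_crossing {B1 B2 : Set α} (hB2 : B2 ⊆ S) (hB1 : Disjoint B1 S)
    (h0 : f 0 ∈ S) (hn : f n ∉ S)
    (hcross : ∀ i < n, f i ∈ S → f (i + 1) ∉ S → f i ∈ B2 ∧ f (i + 1) ∈ B1)
    (hnear : ∀ i ≤ n, ∀ k ≤ n, f i ∈ B2 → f k ∈ B1 → k ≤ i + 1 ∧ i ≤ k + 1) :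
    ∃ j < n, f j ∈ B2 ∧ f (j + 1) ∈ B1 ∧
      (∀ k ≤ n, f k ∈ B1 → k = j + 1) ∧ (∀ k ≤ n, f k ∈ B2 → k = j) := by
  obtain ⟨j, hjn, hjS, hj1⟩ := exists_first_exit f S h0 hn
  obtain ⟨hjB2, hj1B1⟩ := hcross j hjn (hjS j le_rfl) hj1
  have hB1idx : ∀ k ≤ n, f k ∈ B1 → k = j + 1 := fun k hkn hk => by
    have hjk : j < k := not_le.mp fun hkj => hB1.notMem_of_mem_left hk (hjS k hkj)
    have := hnear j hjn.le k hkn hjB2 hk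
    omega
  obtain ⟨m, hmn, hmS, hmlast⟩ := exists_last_mem f S h0 hn
  have hmj : m = j := by
    have := hB1idx (m + 1) hmn (hcross m hmn hmS (hmlast _ (by omega) hmn)).2
    omega
  refine ⟨j, hjn, hjB2, hj1B1, hB1idx, fun k hkn hk => ?_⟩
  have hkm : k ≤ m := not_lt.mp fun hmk => hmlast k hmk hkn (hB2 hk)
  have := hnear k hkn (j + 1) hjn hk hj1B1
  omega

end Crossing

theorem stmt_5_general {V : Type*} (G T : SimpleGraph V) (r : V)
    (hT : IsBFSTree G T r) (X1 X2 A1 B1 A2 B2 : Set V)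
    (hsplit : IsTwoJoinSplit G X1 X2 A1 B1 A2 B2) (hr : r ∈ X2)
    (hnoedge : ∀ u v, T.Adj u v → ¬ (u ∈ A1 ∧ v ∈ A2))
    (a : V) (ha : a ∈ A1) (P : T.Walk r a) (hP : P.IsPath) :
    ∃ b2 b1 : V, b2 ∈ B2 ∧ b1 ∈ B1 ∧ G.Adj b2 b1 ∧
      (∀ x ∈ P.support, x ∈ B1 → x = b1) ∧
      (∀ x ∈ P.support, x ∈ B2 → x = b2) ∧
      ∃ i : ℕ, P.support[i]? = some b2 ∧ P.support[i + 1]? = some b1 := by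
  have hcross : ∀ i < P.length, P.getVert i ∈ X2 → P.getVert (i + 1) ∉ X2 →
      P.getVert i ∈ B2 ∧ P.getVert (i + 1) ∈ B1 := fun i hi hx hy => by
    have hadj := P.adj_getVert_succ hi
    exact hsplit.mem_B2_and_mem_B1_of_adj hx (hsplit.mem_X1_iff.mpr hy) (hT.1.1 hadj)
      (hnoedge _ _ hadj.symm)
  have hX1 : ∀ x ∈ X1, x ∉ X2 := fun _ => hsplit.mem_X1_iff.mp
  obtain ⟨-, -, hA1X1, hB1X1, -, hB2X2, -, -, -, -, -, -, -, hBB, -⟩ := hsplit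
  have hnear : ∀ i ≤ P.length, ∀ k ≤ P.length, P.getVert i ∈ B2 → P.getVert k ∈ B1 →
      k ≤ i + 1 ∧ i ≤ k + 1 := fun i hi k hk hiB2 hkB1 =>
    have hadj := hBB _ hkB1 _ hiB2
    ⟨hT.le_succ_of_adj_getVert hP hi hk hadj.symm, hT.le_succ_of_adj_getVert hP hk hi hadj⟩
  obtain ⟨j, hjn, hjB2, hj1B1, hB1idx, hB2idx⟩ := exists_unique_crossing P.getVert X2
    hB2X2 (Set.disjoint_left.mpr fun _ hx => hX1 _ (hB1X1 hx)) (by rwa [Walk.getVert_zero])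
    (by rw [Walk.getVert_length]; exact hX1 a (hA1X1 ha)) hcross hnear
  refine ⟨_, _, hjB2, hj1B1, (hBB _ hj1B1 _ hjB2).symm, ?_, ?_, j,
    (P.getVert_eq_support_getElem? hjn.le).symm, (P.getVert_eq_support_getElem? hjn).symm⟩
  all_goals
    intro x hx hxB
    obtain ⟨k, rfl, hk⟩ := Walk.mem_support_iff_exists_getVert.mp hx
  · rw [hB1idx k hk hxB]
  · rw [hB2idx k hk hxB]

theorem stmt_5 {V : Type*} (G T : SimpleGraph V) (r : V) (hG : G.Connected)
    (hT : IsBFSTree G T r) (X1 X2 A1 B1 A2 B2 : Set V)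
    (hsplit : IsTwoJoinSplit G X1 X2 A1 B1 A2 B2) (hr : r ∈ X2)
    (hnoedge : ∀ u v, T.Adj u v → ¬ (u ∈ A1 ∧ v ∈ A2))
    (a : V) (ha : a ∈ A1) (P : T.Walk r a) (hP : P.IsPath) :
    ∃ b2 b1 : V, b2 ∈ B2 ∧ b1 ∈ B1 ∧ G.Adj b2 b1 ∧
      (∀ x ∈ P.support, x ∈ B1 → x = b1) ∧
      (∀ x ∈ P.support, x ∈ B2 → x = b2) ∧
      ∃ i : ℕ, P.support[i]? = some b2 ∧ P.support[i + 1]? = some b1 :=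
  stmt_5_general G T r hT X1 X2 A1 B1 A2 B2 hsplit hr hnoedge a ha P hP
end

section
/- Let G be a connected graph with a 2-join having split (X1, X2, A1, B1, A2, B2), let (T, r) be a BFS-tree of G with root r ∈ X2, and suppose T contains no edge between A1 and A2. Let a ∈ A1, let P be the path in T from r to a, let b2 ∈ B2 and b1 ∈ B1 be the consecutive vertices of P in B2 and B1 respectively, and let u be the child of b1 on P. Then every descendant of u in T (including u) belongs to X1. -/
open SimpleGraph Set

/-!
Along a path of the BFS-tree starting at `r`, the `j`-th vertex is at level `j`. A tree edge
leaving level `l(b1) + 1 = l(u)` cannot cross the 2-join: not through `A1`-`A2` by hypothesis,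
and not through `B1`-`B2` either, since every vertex of `B1` is adjacent to `b2` and every
vertex of `B2` is adjacent to `b1`, so both sides of `B` lie at level at most `l(u)`. Hence the
side of `X1`/`X2` is constant on every tree path beyond `u`; on `P` it ends in `a ∈ X1`, so
`u ∈ X1`, and every tree path through `u` stays in `X1`.
-/

namespace SimpleGraph

variable {V : Type*} {G : SimpleGraph V} {u v : V}

lemma Connected.dist_le_dist_add_one_of_adj (hG : G.Connected) (r : V) {x y : V}
    (hxy : G.Adj x y) : G.dist r y ≤ G.dist r x + 1 :=
  calc G.dist r y ≤ G.dist r x + G.dist x y := hG.dist_triangle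
    _ = G.dist r x + 1 := by rw [dist_eq_one_iff_adj.2 hxy]

lemma IsAcyclic.length_eq_dist_of_isPath (hG : G.IsAcyclic) {p : G.Walk u v} (hp : p.IsPath) :
    p.length = G.dist u v := by
  obtain ⟨q, hq, hql⟩ := p.reachable.exists_path_of_dist
  have : p = q := congrArg Subtype.val ((hG.subsingleton_path u v).elim ⟨p, hp⟩ ⟨q, hq⟩)
  rw [this, hql]

lemma IsAcyclic.dist_getVert_of_isPath (hG : G.IsAcyclic) {p : G.Walk u v} (hp : p.IsPath)
    {j : ℕ} (hj : j ≤ p.length) : G.dist u (p.getVert j) = j := by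
  rw [← hG.length_eq_dist_of_isPath (hp.take j), Walk.take_length, min_eq_left hj]

namespace Walk

lemma le_length_and_getVert_eq_of_support_getElem? {p : G.Walk u v} {n : ℕ} {w : V}
    (h : p.support[n]? = some w) : n ≤ p.length ∧ p.getVert n = w := by
  obtain ⟨hn, rfl⟩ := List.getElem?_eq_some_iff.1 h
  exact ⟨by simpa using hn, (p.support_getElem_eq_getVert hn).symm⟩

lemma getVert_mem_iff_of_forall_getVert_succ (p : G.Walk u v) (S : Set V) {s : ℕ}
    (hs : s ≤ p.length)
    (h : ∀ j, s ≤ j → j < p.length → (p.getVert j ∈ S ↔ p.getVert (j + 1) ∈ S)) :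
    p.getVert s ∈ S ↔ v ∈ S := by
  suffices key : ∀ k, s + k ≤ p.length → (p.getVert s ∈ S ↔ p.getVert (s + k) ∈ S) by
    rw [key (p.length - s) (by omega), Nat.add_sub_cancel' hs, p.getVert_length]
  intro k
  induction k with
  | zero => simp
  | succ k ih =>
    intro hk
    rw [ih (by omega), h (s + k) (by omega) (by omega), Nat.add_assoc]

end Walk

end SimpleGraph

namespace IsTwoJoinSplit

variable {V : Type*} {G : SimpleGraph V} {X1 X2 A1 B1 A2 B2 : Set V}

lemma mem_right_iff_notMem_left (h : IsTwoJoinSplit G X1 X2 A1 B1 A2 B2) {x : V} :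
    x ∈ X2 ↔ x ∉ X1 := by
  obtain ⟨huniv, hdisj, -⟩ := h
  refine ⟨fun hx hx1 => disjoint_left.1 hdisj hx1 hx, fun hx => ?_⟩
  have : x ∈ X1 ∪ X2 := huniv ▸ mem_univ x
  exact this.resolve_left hx

lemma mem_left_iff_of_adj (h : IsTwoJoinSplit G X1 X2 A1 B1 A2 B2) (hG : G.Connected)
    {r b1 b2 x y : V} (hb1 : b1 ∈ B1) (hb2 : b2 ∈ B2) (hxy : G.Adj x y)
    (hA : ¬ (x ∈ A1 ∧ y ∈ A2)) (hA' : ¬ (y ∈ A1 ∧ x ∈ A2))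
    (hy1 : G.dist r b1 + 1 < G.dist r y) (hy2 : G.dist r b2 + 1 < G.dist r y) :
    x ∈ X1 ↔ y ∈ X1 := by
  have hX2 {z : V} : z ∉ X1 → z ∈ X2 := h.mem_right_iff_notMem_left.2
  obtain ⟨-, -, -, -, -, -, -, -, -, -, -, -, -, hBB, hcross, -⟩ := h
  by_cases hy : y ∈ X1
  · refine iff_of_true (not_not.1 fun hx => ?_) hy
    rcases hcross y hy x (hX2 hx) hxy.symm with hA1 | ⟨hyB, -⟩
    · exact hA' hA1
    · have := hG.dist_le_dist_add_one_of_adj r (hBB y hyB b2 hb2).symm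
      omega
  · refine iff_of_false (fun hx => ?_) hy
    rcases hcross x hx y (hX2 hy) hxy with hA2 | ⟨-, hyB⟩
    · exact hA hA2
    · have := hG.dist_le_dist_add_one_of_adj r (hBB b1 hb1 y hyB)
      omega

end IsTwoJoinSplit

theorem stmt_6_general {V : Type*} (G T : SimpleGraph V) (r : V) (hG : G.Connected)
    (hT : IsBFSTree G T r) (X1 X2 A1 B1 A2 B2 : Set V)
    (hsplit : IsTwoJoinSplit G X1 X2 A1 B1 A2 B2)
    (hnoedge : ∀ u v, T.Adj u v → ¬ (u ∈ A1 ∧ v ∈ A2))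
    (a : V) (ha : a ∈ A1) (P : T.Walk r a) (hP : P.IsPath)
    (b2 b1 u : V) (hb2 : b2 ∈ B2) (hb1 : b1 ∈ B1)
    (i : ℕ) (hi2 : P.support[i]? = some b2) (hi1 : P.support[i + 1]? = some b1)
    (hiu : P.support[i + 2]? = some u) :
    ∀ (v : V) (Q : T.Walk r v), Q.IsPath → u ∈ Q.support → v ∈ X1 := by
  obtain ⟨⟨hTG, hTtree⟩, hdist⟩ := hT
  have hlevel : ∀ {v} (Q : T.Walk r v), Q.IsPath → ∀ j ≤ Q.length, G.dist r (Q.getVert j) = j :=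
    fun Q hQ j hj => hdist _ ▸ hTtree.isAcyclic.dist_getVert_of_isPath hQ hj
  obtain ⟨hi2P, hb2v⟩ := Walk.le_length_and_getVert_eq_of_support_getElem? hi2
  obtain ⟨hi1P, hb1v⟩ := Walk.le_length_and_getVert_eq_of_support_getElem? hi1
  obtain ⟨hiuP, huv⟩ := Walk.le_length_and_getVert_eq_of_support_getElem? hiu
  have hdb2 : G.dist r b2 = i := hb2v ▸ hlevel P hP i hi2P
  have hdb1 : G.dist r b1 = i + 1 := hb1v ▸ hlevel P hP (i + 1) hi1P
  have hside : ∀ {v} (Q : T.Walk r v), Q.IsPath →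
      ∀ j, i + 2 ≤ j → j < Q.length → (Q.getVert j ∈ X1 ↔ Q.getVert (j + 1) ∈ X1) := by
    intro v Q hQ j hj hjQ
    have hadj := Q.adj_getVert_succ hjQ
    refine hsplit.mem_left_iff_of_adj (r := r) hG hb1 hb2 (hTG hadj) (hnoedge _ _ hadj)
      (hnoedge _ _ hadj.symm) ?_ ?_ <;> rw [hlevel Q hQ _ hjQ] <;> omega
  have huX1 : u ∈ X1 := huv ▸
    (P.getVert_mem_iff_of_forall_getVert_succ X1 hiuP (hside P hP)).2 (hsplit.2.2.1 ha)
  intro v Q hQ huQ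
  obtain ⟨t, rfl, ht⟩ := Walk.mem_support_iff_exists_getVert.1 huQ
  have hti : t = i + 2 := by rw [← hlevel Q hQ t ht, ← huv, hlevel P hP _ hiuP]
  subst hti
  exact (Q.getVert_mem_iff_of_forall_getVert_succ X1 ht (hside Q hQ)).1 huX1

theorem stmt_6 {V : Type*} (G T : SimpleGraph V) (r : V) (hG : G.Connected)
    (hT : IsBFSTree G T r) (X1 X2 A1 B1 A2 B2 : Set V)
    (hsplit : IsTwoJoinSplit G X1 X2 A1 B1 A2 B2) (hr : r ∈ X2)
    (hnoedge : ∀ u v, T.Adj u v → ¬ (u ∈ A1 ∧ v ∈ A2))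
    (a : V) (ha : a ∈ A1) (P : T.Walk r a) (hP : P.IsPath)
    (b2 b1 u : V) (hb2 : b2 ∈ B2) (hb1 : b1 ∈ B1)
    (i : ℕ) (hi2 : P.support[i]? = some b2) (hi1 : P.support[i + 1]? = some b1)
    (hiu : P.support[i + 2]? = some u) :
    ∀ (v : V) (Q : T.Walk r v), Q.IsPath → u ∈ Q.support → v ∈ X1 :=
  stmt_6_general G T r hG hT X1 X2 A1 B1 A2 B2 hsplit hnoedge a ha P hP b2 b1 u hb2 hb1 i hi2 hi1
    hiu
end

section
/- Let G be a connected graph with no star cutset, and let (X1, X2, A1, B1, A2, B2) be a split of a minimally-sided non-path 2-join of G with X_i a minimal side. Then |A_i| ≥ 2 and |B_i| ≥ 2. -/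
open SimpleGraph Set

/-- `G` has a star cutset: a set `S` containing a vertex adjacent to all the rest of
`S`, whose removal disconnects `G`. -/
def HasStarCutset {V : Type*} (G : SimpleGraph V) : Prop :=
  ∃ S : Set V, (∃ x ∈ S, ∀ y ∈ S, y ≠ x → G.Adj x y) ∧
    ∃ u v : ↥(Sᶜ), ¬ (G.induce Sᶜ).Reachable u v

/-!
Suppose `A1 = {a}`. Star cutsets centred at a vertex of `B1` show that `a` has a neighbour in `X1`
and none in `B1`. If `|X1| ≥ 4`, moving `a` to the other side gives the 2-join
`(X1 \ {a}, X2 ∪ {a})` with split `(N(a) ∩ X1, B1, {a}, B2)`; it is a path 2-join by minimality.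
Since the split of a 2-join is unique up to exchanging the `A`- and `B`-parts, `X1 \ {a}` or
`X2 ∪ {a}` is then a chordless path, and adding or removing `a` shows that `(X1, X2)` is a path
2-join. If `|X1| = 3`, `X1` is directly a path `a – n – b`. The bound for `B1` follows by exchanging
`A` and `B`.
-/

section

variable {V : Type*} {G : SimpleGraph V}

theorem hasStarCutset_of_separation {S T : Set V} {x u v : V} (hx : x ∈ S)
    (hxS : ∀ y ∈ S, y ≠ x → G.Adj x y) (hu : u ∈ T) (huS : u ∉ S) (hvT : v ∉ T) (hvS : v ∉ S)
    (hT : ∀ p ∈ T, ∀ q, G.Adj p q → q ∉ S → q ∈ T) :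
    HasStarCutset G := by
  refine ⟨S, ⟨x, hx, hxS⟩, ⟨u, huS⟩, ⟨v, hvS⟩, fun ⟨w⟩ => ?_⟩
  obtain ⟨d, -, hd₁, hd₂⟩ := w.exists_boundary_dart {y | (y : V) ∈ T} hu hvT
  exact hd₂ (hT _ hd₁ _ (comap_adj.1 d.adj) d.snd.2)

namespace IsPathSide

theorem reverse {X A B : Set V} (h : IsPathSide G X A B) : IsPathSide G X B A := by
  obtain ⟨k, f, hinj, rfl, h0, hlast, hint, hadj⟩ := h
  refine ⟨k, f ∘ Fin.rev, hinj.comp Fin.rev_injective, (Fin.rev_surjective.range_comp f).symm,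
    by simpa using hlast, by simpa using h0, fun i hi0 hil => ?_, fun i j => ?_⟩
  · have := hint i.rev (by simpa [Fin.rev_eq_iff] using hil) (by simpa [Fin.rev_eq_iff] using hi0)
    simpa [or_comm] using this
  · simp only [Function.comp_apply, hadj, Fin.val_rev]
    omega

end IsPathSide

theorem forall_adj_cons_iff {n : ℕ} (a : V) (f : Fin n → V) :
    (∀ i j : Fin (n + 1),
        G.Adj ((Fin.cons a f : Fin (n + 1) → V) i) ((Fin.cons a f : Fin (n + 1) → V) j) ↔
          ((i : ℕ) + 1 = j ∨ (j : ℕ) + 1 = i)) ↔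
      (∀ j, G.Adj a (f j) ↔ (j : ℕ) = 0) ∧
        ∀ i j : Fin n, G.Adj (f i) (f j) ↔ ((i : ℕ) + 1 = j ∨ (j : ℕ) + 1 = i) := by
  refine ⟨fun h => ⟨fun j => by simpa using h 0 j.succ, fun i j => by simpa using h i.succ j.succ⟩,
    fun ⟨ha, hf⟩ i j => ?_⟩
  induction i using Fin.cases <;> induction j using Fin.cases
  · simp
  · simp [ha, eq_comm]
  · simp [G.adj_comm _ a, ha]
  · simp [hf]

theorem isPathSide_insert_iff {X A B : Set V} {a : V} (haX : a ∉ X) (haB : a ∉ B)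
    (hAB : Disjoint A B) (hadj : ∀ x ∈ X, G.Adj a x ↔ x ∈ A) :
    IsPathSide G (insert a X) {a} B ↔ IsPathSide G X A B := by
  constructor
  · rintro ⟨m, g, hinj, hrange, h0, hlast, hint, hadjg⟩
    obtain ⟨k, rfl⟩ : ∃ k, m = k + 1 :=
      Nat.exists_eq_succ_of_ne_zero (by rintro rfl; exact haB (h0 ▸ hlast))
    obtain ⟨f, rfl⟩ : ∃ f, g = Fin.cons a f := ⟨Fin.tail g, by rw [← h0, Fin.cons_self_tail]⟩
    obtain ⟨haf, hinj⟩ := Fin.cons_injective_iff.1 hinj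
    obtain ⟨hadja, hadjf⟩ := (forall_adj_cons_iff a f).1 hadjg
    rw [Fin.range_cons] at hrange
    have hX : X = Set.range f := by
      rw [← Set.insert_sdiff_self_of_notMem haX, hrange, Set.insert_sdiff_self_of_notMem haf]
    have hA : ∀ j, f j ∈ A ↔ (j : ℕ) = 0 := fun j =>
      (hadj _ (hX ▸ Set.mem_range_self j)).symm.trans (hadja j)
    refine ⟨k, f, hinj, hX, (hA 0).2 rfl, by simpa using hlast, fun j hj0 hjl => ?_, hadjf⟩
    have := hint j.succ (Fin.succ_ne_zero j) (by simpa [← Fin.succ_last] using hjl)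
    simp only [Fin.cons_succ, Set.singleton_union, Set.mem_insert_iff, not_or] at this
    exact fun hj => hj.elim (fun h => hj0 (Fin.ext ((hA j).1 h))) this.2
  · rintro ⟨k, f, hinj, rfl, h0, hlast, hint, hadjf⟩
    have hA : ∀ j, f j ∈ A ↔ (j : ℕ) = 0 := by
      refine fun j => ⟨fun hj => ?_, fun hj => (Fin.ext hj : j = 0) ▸ h0⟩
      by_contra hj0
      by_cases hjl : j = Fin.last k
      · exact hAB.ne_of_mem hj (hjl ▸ hlast) rfl
      · exact hint j (fun h => hj0 (by simp [h])) hjl (Or.inl hj)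
    refine ⟨k + 1, Fin.cons a f, Fin.cons_injective_iff.2 ⟨haX, hinj⟩, (Fin.range_cons a f).symm,
      rfl, by simpa [← Fin.succ_last] using hlast, fun i hi0 hil => ?_,
      (forall_adj_cons_iff a f).2 ⟨fun j => (hadj _ (Set.mem_range_self j)).trans (hA j), hadjf⟩⟩
    induction i using Fin.cases with
    | zero => exact absurd rfl hi0
    | succ j =>
      have hjl : j ≠ Fin.last k := by rintro rfl; exact hil (Fin.succ_last k)
      simp only [Fin.cons_succ, Set.singleton_union, Set.mem_insert_iff, not_or]
      refine ⟨fun h => haX (h ▸ Set.mem_range_self j), fun hB => ?_⟩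
      by_cases hj0 : j = 0
      · exact hAB.ne_of_mem (hj0 ▸ h0) (hj0 ▸ hB) rfl
      · exact hint j hj0 hjl (Or.inr hB)

theorem isPathSide_pair {A B : Set V} {p q : V} (hpq : G.Adj p q) (hp : p ∈ A) (hq : q ∈ B) :
    IsPathSide G {p, q} A B := by
  refine ⟨1, ![p, q], ?_, by simp [Set.pair_comm], hp, hq, fun i hi0 hil => ?_, fun i j => ?_⟩
  · simpa [Function.Injective, Fin.forall_fin_two] using ⟨hpq.ne, hpq.ne.symm⟩
  · fin_cases i <;> simp_all
  · fin_cases i <;> fin_cases j <;> simp [hpq, hpq.symm]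

namespace IsTwoJoinSplit

variable {X1 X2 A1 B1 A2 B2 : Set V}

theorem swap (h : IsTwoJoinSplit G X1 X2 A1 B1 A2 B2) : IsTwoJoinSplit G X1 X2 B1 A1 B2 A2 := by
  obtain ⟨h1, h2, h3, h4, h5, h6, h7, h8, h9, h10, h11, h12, h13, h14, h15, h16, h17⟩ := h
  exact ⟨h1, h2, h4, h3, h6, h5, h7.symm, h8.symm, h10, h9, h12, h11, h14, h13,
    fun x hx y hy hxy => (h15 x hx y hy hxy).symm, h16, h17⟩

theorem exists_mem_ne_ne (h : IsTwoJoinSplit G X1 X2 A1 B1 A2 B2) (a b : V) :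
    ∃ w ∈ X1, w ≠ a ∧ w ≠ b := by
  obtain ⟨-, -, -, -, -, -, -, -, -, -, -, -, -, -, -, hX1, -⟩ := h
  have hab : ({a, b} : Set V).ncard < X1.ncard :=
    (Set.ncard_insert_le a {b}).trans_lt (by simp only [Set.ncard_singleton]; omega)
  obtain ⟨w, hw, hwab⟩ := Set.exists_mem_notMem_of_ncard_lt_ncard hab
  simp only [Set.mem_insert_iff, Set.mem_singleton_iff, not_or] at hwab
  exact ⟨w, hw, hwab⟩

theorem mem_A1_iff_adj (h : IsTwoJoinSplit G X1 X2 A1 B1 A2 B2) {x y : V} (hx : x ∈ X1)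
    (hy : y ∈ A2) : x ∈ A1 ↔ G.Adj x y := by
  obtain ⟨-, -, -, -, hA2, -, -, hA2B2, -, -, -, -, hAA, -, hcross, -, -⟩ := h
  refine ⟨fun hxA => hAA x hxA y hy, fun hxy => ?_⟩
  rcases hcross x hx y (hA2 hy) hxy with ⟨hxA, -⟩ | ⟨-, hyB⟩
  · exact hxA
  · exact absurd hyB (hA2B2.notMem_of_mem_left hy)

theorem mem_A2_iff_adj (h : IsTwoJoinSplit G X1 X2 A1 B1 A2 B2) {x y : V} (hx : x ∈ A1)
    (hy : y ∈ X2) : y ∈ A2 ↔ G.Adj x y := by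
  obtain ⟨-, -, hA1, -, -, -, hA1B1, -, -, -, -, -, hAA, -, hcross, -, -⟩ := h
  refine ⟨fun hyA => hAA x hx y hyA, fun hxy => ?_⟩
  rcases hcross x (hA1 hx) y hy hxy with ⟨-, hyA⟩ | ⟨hxB, -⟩
  · exact hyA
  · exact absurd hxB (hA1B1.notMem_of_mem_left hx)

theorem A_eq_of_mem {C1 D1 C2 D2 : Set V} (h : IsTwoJoinSplit G X1 X2 A1 B1 A2 B2)
    (h' : IsTwoJoinSplit G X1 X2 C1 D1 C2 D2) {a1 a2 : V} (ha1 : a1 ∈ A1) (hc1 : a1 ∈ C1)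
    (ha2 : a2 ∈ A2) (hc2 : a2 ∈ C2) : C1 = A1 ∧ C2 = A2 := by
  obtain ⟨-, -, hA1, -, hA2, -⟩ := id h
  obtain ⟨-, -, hC1, -, hC2, -⟩ := id h'
  constructor
  · have key : ∀ x ∈ X1, x ∈ C1 ↔ x ∈ A1 := fun x hx =>
      (h'.mem_A1_iff_adj hx hc2).trans (h.mem_A1_iff_adj hx ha2).symm
    ext x
    exact ⟨fun hx => (key x (hC1 hx)).1 hx, fun hx => (key x (hA1 hx)).2 hx⟩
  · have key : ∀ y ∈ X2, y ∈ C2 ↔ y ∈ A2 := fun y hy =>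
      (h'.mem_A2_iff_adj hc1 hy).trans (h.mem_A2_iff_adj ha1 hy).symm
    ext y
    exact ⟨fun hy => (key y (hC2 hy)).1 hy, fun hy => (key y (hA2 hy)).2 hy⟩

theorem eq_of_mem {C1 D1 C2 D2 : Set V} (h : IsTwoJoinSplit G X1 X2 A1 B1 A2 B2)
    (h' : IsTwoJoinSplit G X1 X2 C1 D1 C2 D2) {a1 a2 : V} (ha1 : a1 ∈ A1) (hc1 : a1 ∈ C1)
    (ha2 : a2 ∈ A2) (hc2 : a2 ∈ C2) : C1 = A1 ∧ D1 = B1 ∧ C2 = A2 ∧ D2 = B2 := by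
  obtain ⟨rfl, rfl⟩ := h.A_eq_of_mem h' ha1 hc1 ha2 hc2
  obtain ⟨-, -, -, hD1, -, hD2, hCD1, -, -, ⟨d1, hd1⟩, -, ⟨d2, hd2⟩, -, hDD, -, -, -⟩ := id h'
  obtain ⟨-, -, -, -, -, -, -, -, -, -, -, -, -, -, hcross, -, -⟩ := id h
  rcases hcross d1 (hD1 hd1) d2 (hD2 hd2) (hDD d1 hd1 d2 hd2) with ⟨hd1C, -⟩ | ⟨hb1, hb2⟩
  · exact absurd hd1 (hCD1.notMem_of_mem_left hd1C)
  · obtain ⟨hD1B1, hD2B2⟩ := h.swap.A_eq_of_mem h'.swap hb1 hd1 hb2 hd2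
    exact ⟨rfl, hD1B1, rfl, hD2B2⟩

theorem eq_or_eq_swap {C1 D1 C2 D2 : Set V} (h : IsTwoJoinSplit G X1 X2 A1 B1 A2 B2)
    (h' : IsTwoJoinSplit G X1 X2 C1 D1 C2 D2) :
    (C1 = A1 ∧ D1 = B1 ∧ C2 = A2 ∧ D2 = B2) ∨ (D1 = A1 ∧ C1 = B1 ∧ D2 = A2 ∧ C2 = B2) := by
  obtain ⟨-, -, hA1, -, hA2, -, -, -, ⟨a1, ha1⟩, -, ⟨a2, ha2⟩, -, hAA, -⟩ := id h
  obtain ⟨-, -, -, -, -, -, -, -, -, -, -, -, -, -, hcross, -, -⟩ := id h'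
  rcases hcross a1 (hA1 ha1) a2 (hA2 ha2) (hAA a1 ha1 a2 ha2) with ⟨hc1, hc2⟩ | ⟨hd1, hd2⟩
  · exact Or.inl (h.eq_of_mem h' ha1 hc1 ha2 hc2)
  · exact Or.inr (h.eq_of_mem h'.swap ha1 hd1 ha2 hd2)

theorem isPathSide_of_isPathTwoJoin (h : IsTwoJoinSplit G X1 X2 A1 B1 A2 B2)
    (hp : IsPathTwoJoin G X1 X2) : IsPathSide G X1 A1 B1 ∨ IsPathSide G X2 A2 B2 := by
  obtain ⟨C1, D1, C2, D2, h', hside⟩ := hp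
  rcases h.eq_or_eq_swap h' with ⟨rfl, rfl, rfl, rfl⟩ | ⟨rfl, rfl, rfl, rfl⟩
  · exact hside
  · exact hside.imp IsPathSide.reverse IsPathSide.reverse

/-- The star `N[b] \ {w}` separates `w` from `A2`. -/
theorem hasStarCutset_of_mem_B1 (h : IsTwoJoinSplit G X1 X2 A1 B1 A2 B2) {b w : V} (hb : b ∈ B1)
    (hw : w ∈ X1) (hwA : w ∉ A1) (hwb : w ≠ b)
    (hA1 : ∀ a ∈ A1, ∀ x ∈ X1, x ∉ A1 → G.Adj a x → G.Adj b a) : HasStarCutset G := by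
  obtain ⟨huniv, hdisj, -, hB1, hA2, -, hA1B1, -, -, -, ⟨a2, ha2⟩, -, -, hBB, hcross, -, -⟩ :=
    id h
  have hX : ∀ x, x ∈ X1 ∨ x ∈ X2 := fun x => by simp [← Set.mem_union, huniv]
  have hba2 : ¬ G.Adj b a2 := fun hadj => hA1B1.notMem_of_mem_right hb
    ((h.mem_A1_iff_adj (hB1 hb) ha2).2 hadj)
  refine hasStarCutset_of_separation (S := {y | (y = b ∨ G.Adj b y) ∧ y ≠ w})
    (T := {x | x ∈ X1 ∧ x ∉ A1 ∧ ¬ ((x = b ∨ G.Adj b x) ∧ x ≠ w)}) (x := b) (u := w) (v := a2)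
    ⟨Or.inl rfl, hwb.symm⟩ (fun y hy hyb => hy.1.resolve_left hyb) ⟨hw, hwA, fun h => h.2 rfl⟩
    (fun h => h.2 rfl) (fun h => hdisj.notMem_of_mem_left h.1 (hA2 ha2)) ?_ ?_
  · rintro ⟨rfl | hba2', -⟩
    · exact hdisj.notMem_of_mem_left (hB1 hb) (hA2 ha2)
    · exact hba2 hba2'
  · rintro p ⟨hp, hpA, -⟩ q hpq hqS
    rcases hX q with hq | hq
    · refine ⟨hq, fun hqA => hqS ⟨Or.inr (hA1 q hqA p hp hpA hpq.symm), ?_⟩, hqS⟩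
      rintro rfl; exact hwA hqA
    · rcases hcross p hp q hq hpq with ⟨hpA', -⟩ | ⟨-, hqB⟩
      · exact absurd hpA' hpA
      · refine absurd ⟨Or.inr (hBB b hb q hqB), ?_⟩ hqS
        rintro rfl; exact hdisj.notMem_of_mem_left hw hq

section Singleton

variable {a : V}

theorem not_adj_of_singleton (hstar : ¬ HasStarCutset G)
    (h : IsTwoJoinSplit G X1 X2 {a} B1 A2 B2) {b : V} (hb : b ∈ B1) : ¬ G.Adj a b := by
  intro hab
  obtain ⟨w, hw, hwa, hwb⟩ := h.exists_mem_ne_ne a b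
  exact hstar (h.hasStarCutset_of_mem_B1 hb hw hwa hwb fun a' ha' _ _ _ _ => ha' ▸ hab.symm)

theorem exists_adj_of_singleton (hstar : ¬ HasStarCutset G)
    (h : IsTwoJoinSplit G X1 X2 {a} B1 A2 B2) : ∃ x ∈ X1, G.Adj a x := by
  by_contra! hN
  obtain ⟨-, -, -, -, -, -, -, -, -, ⟨b, hb⟩, -⟩ := id h
  obtain ⟨w, hw, hwa, hwb⟩ := h.exists_mem_ne_ne a b
  exact hstar (h.hasStarCutset_of_mem_B1 hb hw hwa hwb fun a' ha' x hx _ hax =>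
    absurd hax (ha' ▸ hN x hx))

theorem diff_singleton_insert (h : IsTwoJoinSplit G X1 X2 {a} B1 A2 B2)
    (hB1 : ∀ b ∈ B1, ¬ G.Adj a b) (hN : (X1 ∩ G.neighborSet a).Nonempty) (hX1 : 4 ≤ X1.ncard) :
    IsTwoJoinSplit G (X1 \ {a}) (insert a X2) (X1 ∩ G.neighborSet a) B1 {a} B2 := by
  obtain ⟨huniv, hdisj, hA1, hB1X, -, hB2, hA1B1, -, -, hB1ne, -, hB2ne, -, hBB, hcross, -, hX2⟩ :=
    h
  have ha : a ∈ X1 := hA1 rfl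
  refine ⟨?_, ?_, fun x ⟨hx, hax⟩ => ⟨hx, hax.ne'⟩,
    fun b hb => ⟨hB1X hb, hA1B1.notMem_of_mem_right hb⟩,
    Set.singleton_subset_iff.2 (Set.mem_insert a X2), hB2.trans (Set.subset_insert a X2),
    Set.disjoint_left.2 fun x hx hxB => hB1 x hxB hx.2,
    Set.disjoint_singleton_left.2 fun haB => hdisj.notMem_of_mem_left ha (hB2 haB),
    hN, hB1ne, Set.singleton_nonempty a, hB2ne, fun x hx y hy => hy ▸ hx.2.symm, hBB, ?_, ?_, ?_⟩
  · rw [Set.union_insert, ← Set.insert_union, Set.insert_sdiff_singleton, Set.insert_eq_of_mem ha,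
      huniv]
  · exact Set.disjoint_insert_right.2 ⟨fun h => h.2 rfl, hdisj.mono_left Set.sdiff_subset⟩
  · rintro x ⟨hx, hxa⟩ y (rfl | hy) hxy
    · exact Or.inl ⟨⟨hx, hxy.symm⟩, rfl⟩
    · exact Or.inr ((hcross x hx y hy hxy).resolve_left fun h => hxa h.1)
  · rw [Set.ncard_sdiff_singleton_of_mem ha]
    omega
  · exact hX2.trans (Set.ncard_le_ncard (Set.subset_insert a X2)
      ((Set.finite_of_ncard_pos (by omega)).insert a))

theorem isPathSide_of_ncard_eq_three (hstar : ¬ HasStarCutset G)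
    (h : IsTwoJoinSplit G X1 X2 {a} B1 A2 B2) (hB1 : ∀ b ∈ B1, ¬ G.Adj a b) {n : V}
    (hn : n ∈ X1) (han : G.Adj a n) (h3 : X1.ncard = 3) :
    IsPathSide G (X1 \ {a}) (X1 ∩ G.neighborSet a) B1 := by
  obtain ⟨-, -, hA1, hB1X, -, -, hA1B1, -, -, ⟨b, hb⟩, -⟩ := id h
  have ha : a ∈ X1 := hA1 rfl
  have hnb : n ≠ b := by rintro rfl; exact hB1 n hb han
  have hX : X1 \ {a} = {n, b} := by
    refine (Set.eq_of_subset_of_ncard_le ?_ ?_ (Set.finite_of_ncard_pos (by omega)).sdiff).symm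
    · exact Set.insert_subset ⟨hn, han.ne'⟩
        (Set.singleton_subset_iff.2 ⟨hB1X hb, hA1B1.notMem_of_mem_right hb⟩)
    · rw [Set.ncard_sdiff_singleton_of_mem ha, Set.ncard_pair hnb]
      omega
  -- Otherwise `N[a] \ {n}` would separate `n` from `B2`.
  have hnb' : G.Adj n b := by
    by_contra hnb'
    refine hstar (h.swap.hasStarCutset_of_mem_B1 rfl hn (fun hnB => hB1 n hnB han) han.ne'
      fun c hc x hx hxB hcx => absurd hcx ?_)
    have hc' : c ∈ X1 \ {a} := ⟨hB1X hc, hA1B1.notMem_of_mem_right hc⟩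
    obtain rfl | rfl : c = n ∨ c = b := by rwa [hX] at hc'
    · exact absurd han (hB1 c hc)
    by_cases hxa : x = a
    · exact hxa ▸ fun hcx => hB1 c hc hcx.symm
    have hx' : x ∈ X1 \ {a} := ⟨hx, hxa⟩
    obtain rfl | rfl : x = n ∨ x = c := by rwa [hX] at hx'
    · exact fun hcx => hnb' hcx.symm
    · exact absurd hc hxB
  exact hX ▸ isPathSide_pair hnb' ⟨hn, han⟩ hb

theorem isPathTwoJoin_of_isPathSide (h : IsTwoJoinSplit G X1 X2 {a} B1 A2 B2)
    (hB1 : ∀ b ∈ B1, ¬ G.Adj a b)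
    (hside : IsPathSide G (X1 \ {a}) (X1 ∩ G.neighborSet a) B1 ∨
      IsPathSide G (insert a X2) {a} B2) :
    IsPathTwoJoin G X1 X2 := by
  obtain ⟨-, hdisj, hA1, -, -, hB2, hA1B1, hA2B2, -⟩ := id h
  have ha : a ∈ X1 := hA1 rfl
  have haX2 : a ∉ X2 := hdisj.notMem_of_mem_left ha
  rcases hside with hside | hside
  · refine ⟨{a}, B1, A2, B2, h, Or.inl ?_⟩
    have := (isPathSide_insert_iff (A := X1 ∩ G.neighborSet a) (fun h => h.2 rfl)
      (hA1B1.notMem_of_mem_left rfl) (Set.disjoint_left.2 fun x hx hxB => hB1 x hxB hx.2)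
      fun x hx => ⟨fun hax => ⟨hx.1, hax⟩, fun hx => hx.2⟩).2 hside
    rwa [Set.insert_sdiff_singleton, Set.insert_eq_of_mem ha] at this
  · exact ⟨{a}, B1, A2, B2, h, Or.inr ((isPathSide_insert_iff haX2 (fun haB => haX2 (hB2 haB))
      hA2B2 fun x hx => (h.mem_A2_iff_adj rfl hx).symm).1 hside)⟩

theorem isPathTwoJoin_of_singleton (hstar : ¬ HasStarCutset G)
    (h : IsTwoJoinSplit G X1 X2 {a} B1 A2 B2)
    (hmin : ∀ X1' X2', IsNonPathTwoJoin G X1' X2' → ¬ X1' ⊂ X1) : IsPathTwoJoin G X1 X2 := by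
  obtain ⟨-, -, hA1, -, -, -, -, -, -, -, -, -, -, -, -, hX1, -⟩ := id h
  have hB1 : ∀ b ∈ B1, ¬ G.Adj a b := fun b hb => h.not_adj_of_singleton hstar hb
  obtain ⟨n, hn, han⟩ := h.exists_adj_of_singleton hstar
  refine h.isPathTwoJoin_of_isPathSide hB1 ?_
  rcases (show 4 ≤ X1.ncard ∨ X1.ncard = 3 by omega) with h4 | h3
  · have hmove := h.diff_singleton_insert hB1 ⟨n, hn, han⟩ h4
    refine hmove.isPathSide_of_isPathTwoJoin (not_not.1 fun hnp => ?_)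
    exact hmin _ _ ⟨⟨_, _, _, _, hmove⟩, hnp⟩ (Set.sdiff_singleton_ssubset.2 (hA1 rfl))
  · exact Or.inl (h.isPathSide_of_ncard_eq_three hstar hB1 hn han h3)

end Singleton

theorem two_le_ncard_of_minimal (hstar : ¬ HasStarCutset G)
    (h : IsTwoJoinSplit G X1 X2 A1 B1 A2 B2) (hnp : ¬ IsPathTwoJoin G X1 X2)
    (hmin : ∀ X1' X2', IsNonPathTwoJoin G X1' X2' → ¬ X1' ⊂ X1) : 2 ≤ A1.ncard := by
  obtain ⟨-, -, hA1X, -, -, -, -, -, hA1, -, -, -, -, -, -, hX1, -⟩ := id h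
  have hA1fin : A1.Finite := (Set.finite_of_ncard_pos (s := X1) (by omega)).subset hA1X
  by_contra! hlt
  obtain ⟨a, rfl⟩ : ∃ a, A1 = {a} :=
    Set.ncard_eq_one.1 (by have := (Set.ncard_pos hA1fin).2 hA1; omega)
  exact hnp (h.isPathTwoJoin_of_singleton hstar hmin)

end IsTwoJoinSplit

end

theorem stmt_10_general {V : Type*} (G : SimpleGraph V)
    (hstar : ¬ HasStarCutset G)
    (X1 X2 A1 B1 A2 B2 : Set V) (hsplit : IsTwoJoinSplit G X1 X2 A1 B1 A2 B2)
    (hnp : IsNonPathTwoJoin G X1 X2)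
    (hmin : ∀ X1' X2', IsNonPathTwoJoin G X1' X2' → ¬ (X1' ⊂ X1) ∧ ¬ (X2' ⊂ X1)) :
    2 ≤ A1.ncard ∧ 2 ≤ B1.ncard := by
  have hmin' : ∀ X1' X2', IsNonPathTwoJoin G X1' X2' → ¬ X1' ⊂ X1 :=
    fun X1' X2' h => (hmin X1' X2' h).1
  exact ⟨hsplit.two_le_ncard_of_minimal hstar hnp.2 hmin',
    hsplit.swap.two_le_ncard_of_minimal hstar hnp.2 hmin'⟩

theorem stmt_10 {V : Type*} (G : SimpleGraph V) (hG : G.Connected)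
    (hstar : ¬ HasStarCutset G)
    (X1 X2 A1 B1 A2 B2 : Set V) (hsplit : IsTwoJoinSplit G X1 X2 A1 B1 A2 B2)
    (hnp : IsNonPathTwoJoin G X1 X2)
    (hmin : ∀ X1' X2', IsNonPathTwoJoin G X1' X2' → ¬ (X1' ⊂ X1) ∧ ¬ (X2' ⊂ X1)) :
    2 ≤ A1.ncard ∧ 2 ≤ B1.ncard :=
  stmt_10_general G hstar X1 X2 A1 B1 A2 B2 hsplit hnp hmin
end

section
/- Let G be a graph that has a non-path 2-join. Then G has a minimally-sided non-path 2-join, i.e., a non-path 2-join (X1, X2) such that for some i ∈ {1,2}, no non-path 2-join (X1', X2') of G satisfies X1' ⊊ Xi or X2' ⊊ Xi. -/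
open SimpleGraph Set

theorem stmt_11 {V : Type*} [Fintype V] (G : SimpleGraph V)
    (h : ∃ X1 X2, IsNonPathTwoJoin G X1 X2) :
    ∃ X1 X2, IsNonPathTwoJoin G X1 X2 ∧
      ((∀ X1' X2', IsNonPathTwoJoin G X1' X2' → ¬ (X1' ⊂ X1) ∧ ¬ (X2' ⊂ X1)) ∨
       (∀ X1' X2', IsNonPathTwoJoin G X1' X2' → ¬ (X1' ⊂ X2) ∧ ¬ (X2' ⊂ X2))) := by
  classical
  obtain ⟨Y1, Y2, hY⟩ := h
  set p : ℕ → Prop := fun n =>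
    ∃ X Y, (IsNonPathTwoJoin G X Y ∨ IsNonPathTwoJoin G Y X) ∧ X.ncard = n with hp
  have hpe : ∃ n, p n := ⟨Y1.ncard, Y1, Y2, Or.inl hY, rfl⟩
  obtain ⟨X, Y, hXY, hn⟩ := Nat.find_spec hpe
  -- minimality: no non-path 2-join side is a strict subset of X
  have hmin : ∀ X1' X2', IsNonPathTwoJoin G X1' X2' → ¬ (X1' ⊂ X) ∧ ¬ (X2' ⊂ X) := by
    intro X1' X2' h'
    constructor
    · intro hss
      have hlt : X1'.ncard < Nat.find hpe := by
        rw [← hn]; exact Set.ncard_lt_ncard hss (Set.toFinite X)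
      exact Nat.find_min hpe hlt ⟨X1', X2', Or.inl h', rfl⟩
    · intro hss
      have hlt : X2'.ncard < Nat.find hpe := by
        rw [← hn]; exact Set.ncard_lt_ncard hss (Set.toFinite X)
      exact Nat.find_min hpe hlt ⟨X2', X1', Or.inr h', rfl⟩
  rcases hXY with h1 | h2
  · exact ⟨X, Y, h1, Or.inl hmin⟩
  · exact ⟨Y, X, h2, Or.inr hmin⟩
end

section
/- Let G be a graph, let X be a subset of V(G) that is a side of some 2-join of G with split (X, Y, A, B, A', B') but is not a path-side (i.e., G[X] is not a chordless path from A to B with interior in X \ (A ∪ B)). Then there exist two vertices u, v ∈ X such that no single induced path of G contained in X, with one end in A, the other end in B, interior in X \ (A ∪ B), and all interior vertices of degree 2 in G, contains both u and v. -/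
open SimpleGraph Set

/-- `P` is an induced path of `G` contained in `X`, with one end in `A`, the other end
in `B`, interior in `X \ (A ∪ B)`, and all interior vertices of degree 2 in `G`. -/
def IsDegTwoABPath {V : Type*} [Fintype V] (G : SimpleGraph V) [DecidableRel G.Adj]
    (X A B P : Set V) : Prop :=
  ∃ (k : ℕ) (f : Fin (k+1) → V), Function.Injective f ∧
    P = Set.range f ∧ P ⊆ X ∧ f 0 ∈ A ∧ f (Fin.last k) ∈ B ∧
    (∀ i : Fin (k+1), i ≠ 0 → i ≠ Fin.last k →
      f i ∈ X \ (A ∪ B) ∧ G.degree (f i) = 2) ∧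
    (∀ i j : Fin (k+1), G.Adj (f i) (f j) ↔ ((i : ℕ) + 1 = (j : ℕ) ∨ (j : ℕ) + 1 = (i : ℕ)))

/-! Suppose every two vertices of `X` lie on a common degree-two `A`–`B` path. Every such
path meets `A` only in its first vertex and `B` only in its last, so `A` and `B` have at
most one vertex each, and since `|X| ≥ 3` some `z ∈ X` lies outside `A ∪ B`. Any path
through `z` has `z` as an interior vertex, and from an interior vertex of degree 2 a path
can only continue along the path it lies on; hence all these paths have the same vertex
set, and it exhausts `X`. So `G[X]` is that path, i.e. `X` is a path-side. -/

theorem SimpleGraph.eq_or_eq_of_adj_of_degree_eq_two {V : Type*} [Fintype V]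
    {G : SimpleGraph V} [DecidableRel G.Adj] {w x y z : V} (hw : G.degree w = 2)
    (hx : G.Adj w x) (hy : G.Adj w y) (hxy : x ≠ y) (hz : G.Adj w z) : z = x ∨ z = y := by
  classical
  have hsub : ({x, y} : Finset V) ⊆ G.neighborFinset w := by
    simp [Finset.insert_subset_iff, hx, hy]
  have hcard : (G.neighborFinset w).card ≤ ({x, y} : Finset V).card := by
    rw [Finset.card_pair hxy, card_neighborFinset_eq_degree, hw]
  have hz' : z ∈ ({x, y} : Finset V) := by
    rw [Finset.eq_of_subset_of_card_le hsub hcard, mem_neighborFinset]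
    exact hz
  simpa using hz'

theorem Fin.forall_of_interior_propagate {l : ℕ} {p : Fin (l + 1) → Prop} {j₀ : Fin (l + 1)}
    (h0 : j₀ ≠ 0) (hl : j₀ ≠ Fin.last l) (hj₀ : p j₀)
    (hstep : ∀ j j' : Fin (l + 1), j ≠ 0 → j ≠ Fin.last l →
      (j : ℕ) + 1 = j' ∨ (j' : ℕ) + 1 = j → p j → p j') (j : Fin (l + 1)) : p j := by
  have h0' : (j₀ : ℕ) ≠ 0 := Fin.val_ne_iff.2 h0
  have hl' : (j₀ : ℕ) ≠ l := Fin.val_ne_iff.2 hl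
  have hj₀l := j₀.isLt
  have up : ∀ t (ht : (j₀ : ℕ) + t < l + 1), p ⟨j₀ + t, ht⟩ := by
    intro t
    induction t with
    | zero => exact fun _ => hj₀
    | succ t ih =>
      intro ht
      exact hstep ⟨j₀ + t, by omega⟩ _ (Fin.ne_of_val_ne (by simp only [Fin.val_zero]; omega))
        (Fin.ne_of_val_ne (by simp only [Fin.val_last]; omega)) (Or.inl (by simp only [Fin.val_mk]; omega)) (ih (by omega))
  have down : ∀ t ≤ (j₀ : ℕ), p ⟨j₀ - t, by omega⟩ := by
    intro t
    induction t with
    | zero => exact fun _ => hj₀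
    | succ t ih =>
      intro ht
      exact hstep ⟨j₀ - t, by omega⟩ _ (Fin.ne_of_val_ne (by simp only [Fin.val_zero]; omega))
        (Fin.ne_of_val_ne (by simp only [Fin.val_last]; omega)) (Or.inr (by simp only [Fin.val_mk]; omega)) (ih (by omega))
  rcases le_total (j₀ : ℕ) j with h | h
  · simpa [Nat.add_sub_cancel' h] using up (j - j₀) (by omega)
  · simpa [Nat.sub_sub_self h] using down (j₀ - j) (by omega)

section DegTwoABPath

variable {V : Type*} [Fintype V] {G : SimpleGraph V} [DecidableRel G.Adj] {X A B : Set V}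

structure IsDegTwoABPathFun (G : SimpleGraph V) [DecidableRel G.Adj] (X A B : Set V) {k : ℕ}
    (f : Fin (k + 1) → V) : Prop where
  injective : Function.Injective f
  range_subset : Set.range f ⊆ X
  zero_mem : f 0 ∈ A
  last_mem : f (Fin.last k) ∈ B
  interior : ∀ i, i ≠ 0 → i ≠ Fin.last k → f i ∈ X \ (A ∪ B) ∧ G.degree (f i) = 2
  adj_iff : ∀ i j, G.Adj (f i) (f j) ↔ (i : ℕ) + 1 = j ∨ (j : ℕ) + 1 = i

theorem IsDegTwoABPath.exists_isDegTwoABPathFun {P : Set V} (hP : IsDegTwoABPath G X A B P) :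
    ∃ (k : ℕ) (f : Fin (k + 1) → V), IsDegTwoABPathFun G X A B f ∧ P = Set.range f := by
  obtain ⟨k, f, hinj, rfl, hX, h0, hl, hint, hadj⟩ := hP
  exact ⟨k, f, ⟨hinj, hX, h0, hl, hint, hadj⟩, rfl⟩

namespace IsDegTwoABPathFun

variable {k : ℕ} {f : Fin (k + 1) → V}

theorem ne_zero_of_notMem (hf : IsDegTwoABPathFun G X A B f) {i : Fin (k + 1)}
    (hi : f i ∉ A ∪ B) : i ≠ 0 := by
  rintro rfl
  exact hi (Or.inl hf.zero_mem)

theorem ne_last_of_notMem (hf : IsDegTwoABPathFun G X A B f) {i : Fin (k + 1)}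
    (hi : f i ∉ A ∪ B) : i ≠ Fin.last k := by
  rintro rfl
  exact hi (Or.inr hf.last_mem)

theorem eq_zero_of_mem_left (hf : IsDegTwoABPathFun G X A B f) (hAB : Disjoint A B)
    {i : Fin (k + 1)} (hi : f i ∈ A) : i = 0 := by
  by_contra h0
  by_cases hl : i = Fin.last k
  · subst hl
    exact Set.disjoint_left.1 hAB hi hf.last_mem
  · exact (hf.interior i h0 hl).1.2 (Or.inl hi)

theorem eq_last_of_mem_right (hf : IsDegTwoABPathFun G X A B f) (hAB : Disjoint A B)
    {i : Fin (k + 1)} (hi : f i ∈ B) : i = Fin.last k := by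
  by_contra hl
  by_cases h0 : i = 0
  · subst h0
    exact Set.disjoint_left.1 hAB hf.zero_mem hi
  · exact (hf.interior i h0 hl).1.2 (Or.inr hi)

theorem mem_range_of_adj (hf : IsDegTwoABPathFun G X A B f) {i : Fin (k + 1)} (h0 : i ≠ 0)
    (hl : i ≠ Fin.last k) {u : V} (hu : G.Adj (f i) u) : u ∈ Set.range f := by
  have h0' : (i : ℕ) ≠ 0 := Fin.val_ne_iff.2 h0
  have hl' : (i : ℕ) ≠ k := Fin.val_ne_iff.2 hl
  have hik := i.isLt
  let prev : Fin (k + 1) := ⟨i - 1, by omega⟩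
  let next : Fin (k + 1) := ⟨i + 1, by omega⟩
  have hprev : G.Adj (f i) (f prev) := (hf.adj_iff _ _).2 (Or.inr (by simp only [prev]; omega))
  have hnext : G.Adj (f i) (f next) := (hf.adj_iff _ _).2 (Or.inl rfl)
  have hne : f prev ≠ f next :=
    hf.injective.ne (Fin.ne_of_val_ne (by simp only [prev, next]; omega))
  rcases eq_or_eq_of_adj_of_degree_eq_two (hf.interior i h0 hl).2 hprev hnext hne hu
    with rfl | rfl
  exacts [⟨prev, rfl⟩, ⟨next, rfl⟩]

/-- Vertices outside `A ∪ B` have degree 2, so `g` cannot leave `f` through one of them. -/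
theorem range_subset_of_mem (hf : IsDegTwoABPathFun G X A B f) {l : ℕ}
    {g : Fin (l + 1) → V} (hg : IsDegTwoABPathFun G X A B g) {z : V} (hzf : z ∈ Set.range f)
    (hzg : z ∈ Set.range g) (hz : z ∉ A ∪ B) : Set.range g ⊆ Set.range f := by
  obtain ⟨j₀, rfl⟩ := hzg
  rintro _ ⟨j, rfl⟩
  refine Fin.forall_of_interior_propagate (p := fun j ↦ g j ∈ Set.range f)
    (hg.ne_zero_of_notMem hz) (hg.ne_last_of_notMem hz) hzf ?_ j
  rintro j j' h0 hl hjj' ⟨i, hi⟩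
  have hgj : g j ∉ A ∪ B := (hg.interior j h0 hl).1.2
  rw [← hi] at hgj
  exact hf.mem_range_of_adj (hf.ne_zero_of_notMem hgj) (hf.ne_last_of_notMem hgj)
    (hi ▸ (hg.adj_iff j j').2 hjj')

theorem isPathSide (hf : IsDegTwoABPathFun G X A B f) (hX : X = Set.range f) :
    IsPathSide G X A B :=
  ⟨k, f, hf.injective, hX, hf.zero_mem, hf.last_mem,
    fun i h0 hl ↦ (hf.interior i h0 hl).1.2, hf.adj_iff⟩

end IsDegTwoABPathFun

theorem isPathSide_of_forall_exists_isDegTwoABPath (hAB : Disjoint A B) (hAX : A ⊆ X)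
    (hBX : B ⊆ X) (hX : 3 ≤ X.ncard)
    (hcover : ∀ u ∈ X, ∀ v ∈ X, u ≠ v → ∃ P, IsDegTwoABPath G X A B P ∧ u ∈ P ∧ v ∈ P) :
    IsPathSide G X A B := by
  have hA : A.Subsingleton := by
    intro a ha a' ha'
    by_contra hne
    obtain ⟨P, hP, haP, ha'P⟩ := hcover a (hAX ha) a' (hAX ha') hne
    obtain ⟨k, f, hf, rfl⟩ := hP.exists_isDegTwoABPathFun
    obtain ⟨i, rfl⟩ := haP
    obtain ⟨i', rfl⟩ := ha'P
    rw [hf.eq_zero_of_mem_left hAB ha, hf.eq_zero_of_mem_left hAB ha'] at hne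
    exact hne rfl
  have hB : B.Subsingleton := by
    intro b hb b' hb'
    by_contra hne
    obtain ⟨P, hP, hbP, hb'P⟩ := hcover b (hBX hb) b' (hBX hb') hne
    obtain ⟨k, f, hf, rfl⟩ := hP.exists_isDegTwoABPathFun
    obtain ⟨i, rfl⟩ := hbP
    obtain ⟨i', rfl⟩ := hb'P
    rw [hf.eq_last_of_mem_right hAB hb, hf.eq_last_of_mem_right hAB hb'] at hne
    exact hne rfl
  obtain ⟨z, hzX, hz⟩ : ∃ z ∈ X, z ∉ A ∪ B := by
    by_contra! hXAB
    have := (Set.ncard_le_ncard hXAB).trans (Set.ncard_union_le A B)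
    have := Set.ncard_le_one_iff_subsingleton.2 hA
    have := Set.ncard_le_one_iff_subsingleton.2 hB
    omega
  obtain ⟨w, hwX, hwz⟩ := Set.exists_ne_of_one_lt_ncard (s := X) (by omega) z
  obtain ⟨P, hP, hzP, -⟩ := hcover z hzX w hwX hwz.symm
  obtain ⟨k, f, hf, rfl⟩ := hP.exists_isDegTwoABPathFun
  refine hf.isPathSide (Set.Subset.antisymm (fun y hy ↦ ?_) hf.range_subset)
  obtain rfl | hyz := eq_or_ne y z
  · exact hzP
  obtain ⟨Q, hQ, hyQ, hzQ⟩ := hcover y hy z hzX hyz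
  obtain ⟨l, g, hg, rfl⟩ := hQ.exists_isDegTwoABPathFun
  exact hf.range_subset_of_mem hg hzP hzQ hz hyQ

end DegTwoABPath

theorem stmt_12 {V : Type*} [Fintype V] (G : SimpleGraph V) [DecidableRel G.Adj]
    (X Y A B A' B' : Set V) (hsplit : IsTwoJoinSplit G X Y A B A' B')
    (hnot : ¬ IsPathSide G X A B) :
    ∃ u ∈ X, ∃ v ∈ X, u ≠ v ∧
      ∀ P : Set V, IsDegTwoABPath G X A B P → ¬ (u ∈ P ∧ v ∈ P) := by
  obtain ⟨-, -, hAX, hBX, -, -, hAB, -, -, -, -, -, -, -, -, hX, -⟩ := hsplit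
  by_contra! hcover
  exact hnot (isPathSide_of_forall_exists_isDegTwoABPath hAB hAX hBX hX hcover)
end

section
/- Let G be a graph, Z = (a1, a2, b1, b2) a proper 4-tuple of G, and S0 ⊆ V(G) with |S0| ≥ 3 and {a1, a2, b1, b2} ∩ S0 = {a1, b1}. Among all 2-joins (X1, X2) of G compatible with Z, with a1 ∈ A1, b1 ∈ B1, a2 ∈ A2, b2 ∈ B2 and S0 ⊆ X1, if any exist, there is one whose side X1 is minimum: i.e., there exists such a 2-join with split (X1, X2, A1, B1, A2, B2) such that every 2-join with split (X1', X2', A1', B1', A2', B2') satisfying the same properties has X1 ⊆ X1'. -/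
open SimpleGraph Set

lemma good_inter {V : Type*} [Fintype V] {G : SimpleGraph V}
    {a1 a2 b1 b2 : V} {S0 : Set V}
    {X1 X2 A1 B1 A2 B2 X1' X2' A1' B1' A2' B2' : Set V}
    (h : IsTwoJoinSplit G X1 X2 A1 B1 A2 B2)
    (ha1 : a1 ∈ A1) (hb1 : b1 ∈ B1) (ha2 : a2 ∈ A2) (hb2 : b2 ∈ B2)
    (h' : IsTwoJoinSplit G X1' X2' A1' B1' A2' B2')
    (ha1' : a1 ∈ A1') (hb1' : b1 ∈ B1') (ha2' : a2 ∈ A2') (hb2' : b2 ∈ B2')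
    (hS0 : S0 ⊆ X1) (hS0' : S0 ⊆ X1') (hS0card : 3 ≤ S0.ncard) :
    IsTwoJoinSplit G (X1 ∩ X1') (X1 ∩ X1')ᶜ (A1 ∩ X1') (B1 ∩ X1') (A2 ∪ A2') (B2 ∪ B2') ∧
    a1 ∈ A1 ∩ X1' ∧ b1 ∈ B1 ∩ X1' ∧ a2 ∈ A2 ∪ A2' ∧ b2 ∈ B2 ∪ B2' ∧ S0 ⊆ X1 ∩ X1' := by
  obtain ⟨hu, hd, hA1s, hB1s, hA2s, hB2s, hdAB1, hdAB2, hA1n, hB1n, hA2n, hB2n,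
    hAA, hBB, hE, hc1, hc2⟩ := h
  obtain ⟨hu', hd', hA1s', hB1s', hA2s', hB2s', hdAB1', hdAB2', hA1n', hB1n', hA2n', hB2n',
    hAA', hBB', hE', hc1', hc2'⟩ := h'
  -- complements
  have hcompl : ∀ x, x ∉ X1 → x ∈ X2 := by
    intro x hx
    have := hu ▸ (Set.mem_univ x)
    rcases (Set.mem_union x X1 X2).mp (by rw [hu]; exact Set.mem_univ x) with h | h
    · exact absurd h hx
    · exact h
  have hcompl' : ∀ x, x ∉ X1' → x ∈ X2' := by
    intro x hx
    rcases (Set.mem_union x X1' X2').mp (by rw [hu']; exact Set.mem_univ x) with h | h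
    · exact absurd h hx
    · exact h
  have hnot : ∀ x ∈ X2, x ∉ X1 := fun x hx => Set.disjoint_right.mp hd hx
  have hnot' : ∀ x ∈ X2', x ∉ X1' := fun x hx => Set.disjoint_right.mp hd' hx
  -- key transfer lemmas
  have keyA : ∀ v ∈ A1, v ∈ X1' → v ∈ A1' := by
    intro v hv hv'
    rcases hE' v hv' a2 (hA2s' ha2') (hAA v hv a2 ha2) with ⟨h1, _⟩ | ⟨_, h2⟩
    · exact h1
    · exact absurd h2 (Set.disjoint_right.mp hdAB2' · ha2')
  have keyB : ∀ v ∈ B1, v ∈ X1' → v ∈ B1' := by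
    intro v hv hv'
    rcases hE' v hv' b2 (hB2s' hb2') (hBB v hv b2 hb2) with ⟨_, h2⟩ | ⟨h1, _⟩
    · exact absurd h2 (Set.disjoint_left.mp hdAB2' · hb2')
    · exact h1
  have keyA' : ∀ v ∈ A1', v ∈ X1 → v ∈ A1 := by
    intro v hv hv'
    rcases hE v hv' a2 (hA2s ha2) (hAA' v hv a2 ha2') with ⟨h1, _⟩ | ⟨_, h2⟩
    · exact h1
    · exact absurd h2 (Set.disjoint_right.mp hdAB2 · ha2)
  have keyB' : ∀ v ∈ B1', v ∈ X1 → v ∈ B1 := by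
    intro v hv hv'
    rcases hE v hv' b2 (hB2s hb2) (hBB' v hv b2 hb2') with ⟨_, h2⟩ | ⟨h1, _⟩
    · exact absurd h2 (Set.disjoint_left.mp hdAB2 · hb2)
    · exact h1
  have hS0i : S0 ⊆ X1 ∩ X1' := fun x hx => ⟨hS0 hx, hS0' hx⟩
  refine ⟨⟨Set.union_compl_self _, disjoint_compl_right, ?_, ?_, ?_, ?_, ?_, ?_,
    ⟨a1, ha1, hA1s' ha1'⟩, ⟨b1, hb1, hB1s' hb1'⟩, ⟨a2, Or.inl ha2⟩, ⟨b2, Or.inl hb2⟩,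
    ?_, ?_, ?_, ?_, ?_⟩, ⟨ha1, hA1s' ha1'⟩, ⟨hb1, hB1s' hb1'⟩, Or.inl ha2, Or.inl hb2, hS0i⟩
  · exact fun v hv => ⟨hA1s hv.1, hv.2⟩
  · exact fun v hv => ⟨hB1s hv.1, hv.2⟩
  · rintro v (hv | hv)
    · exact fun hv2 => hnot v (hA2s hv) hv2.1
    · exact fun hv2 => hnot' v (hA2s' hv) hv2.2
  · rintro v (hv | hv)
    · exact fun hv2 => hnot v (hB2s hv) hv2.1
    · exact fun hv2 => hnot' v (hB2s' hv) hv2.2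
  · exact (hdAB1.mono (Set.inter_subset_left) (Set.inter_subset_left))
  · -- Disjoint (A2 ∪ A2') (B2 ∪ B2')
    rw [Set.disjoint_left]
    rintro w (hw | hw) (hw' | hw')
    · exact Set.disjoint_left.mp hdAB2 hw hw'
    · -- w ∈ A2, w ∈ B2'
      rcases hE' a1 (hA1s' ha1') w (hB2s' hw') (hAA a1 ha1 w hw) with ⟨_, h2⟩ | ⟨h1, _⟩
      · exact Set.disjoint_left.mp hdAB2' h2 hw'
      · exact Set.disjoint_left.mp hdAB1' ha1' h1
    · -- w ∈ A2', w ∈ B2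
      rcases hE' b1 (hB1s' hb1') w (hA2s' hw) (hBB b1 hb1 w hw') with ⟨h1, _⟩ | ⟨_, h2⟩
      · exact Set.disjoint_left.mp hdAB1' h1 hb1'
      · exact Set.disjoint_left.mp hdAB2' hw h2
    · exact Set.disjoint_left.mp hdAB2' hw hw'
  · -- completeness A
    rintro v ⟨hvA, hvX⟩ w (hw | hw)
    · exact hAA v hvA w hw
    · exact hAA' v (keyA v hvA hvX) w hw
  · rintro v ⟨hvB, hvX⟩ w (hw | hw)
    · exact hBB v hvB w hw
    · exact hBB' v (keyB v hvB hvX) w hw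
  · -- edge structure
    rintro x ⟨hx1, hx1'⟩ y hy hadj
    rw [Set.mem_compl_iff, Set.mem_inter_iff, not_and_or] at hy
    rcases hy with hy | hy
    · rcases hE x hx1 y (hcompl y hy) hadj with ⟨h1, h2⟩ | ⟨h1, h2⟩
      · exact Or.inl ⟨⟨h1, hx1'⟩, Or.inl h2⟩
      · exact Or.inr ⟨⟨h1, hx1'⟩, Or.inl h2⟩
    · rcases hE' x hx1' y (hcompl' y hy) hadj with ⟨h1, h2⟩ | ⟨h1, h2⟩
      · exact Or.inl ⟨⟨keyA' x h1 hx1, hx1'⟩, Or.inr h2⟩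
      · exact Or.inr ⟨⟨keyB' x h1 hx1, hx1'⟩, Or.inr h2⟩
  · exact hS0card.trans (Set.ncard_le_ncard hS0i (Set.toFinite _))
  · refine hc2.trans (Set.ncard_le_ncard ?_ (Set.toFinite _))
    exact fun x hx hx2 => hnot x hx hx2.1


theorem stmt_13 {V : Type*} [Fintype V] (G : SimpleGraph V)
    (a1 a2 b1 b2 : V) (hp : ProperQuad G a1 a2 b1 b2)
    (S0 : Set V) (hS0card : 3 ≤ S0.ncard)
    (hS0int : ({a1, a2, b1, b2} : Set V) ∩ S0 = {a1, b1})
    (hex : ∃ X1 X2 A1 B1 A2 B2, IsTwoJoinSplit G X1 X2 A1 B1 A2 B2 ∧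
      a1 ∈ A1 ∧ b1 ∈ B1 ∧ a2 ∈ A2 ∧ b2 ∈ B2 ∧ S0 ⊆ X1) :
    ∃ X1 X2 A1 B1 A2 B2,
      (IsTwoJoinSplit G X1 X2 A1 B1 A2 B2 ∧
        a1 ∈ A1 ∧ b1 ∈ B1 ∧ a2 ∈ A2 ∧ b2 ∈ B2 ∧ S0 ⊆ X1) ∧
      (∀ X1' X2' A1' B1' A2' B2',
        (IsTwoJoinSplit G X1' X2' A1' B1' A2' B2' ∧
          a1 ∈ A1' ∧ b1 ∈ B1' ∧ a2 ∈ A2' ∧ b2 ∈ B2' ∧ S0 ⊆ X1') → X1 ⊆ X1') := by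
    classical
  set P : Set V → Prop := fun X1 => ∃ X2 A1 B1 A2 B2,
    (IsTwoJoinSplit G X1 X2 A1 B1 A2 B2 ∧
      a1 ∈ A1 ∧ b1 ∈ B1 ∧ a2 ∈ A2 ∧ b2 ∈ B2 ∧ S0 ⊆ X1) with hP
  obtain ⟨X1, X2, A1, B1, A2, B2, hsplit, ha1, hb1, ha2, hb2, hS0⟩ := hex
  have hne : ∃ n, ∃ X1, P X1 ∧ X1.ncard = n :=
    ⟨X1.ncard, X1, ⟨X2, A1, B1, A2, B2, hsplit, ha1, hb1, ha2, hb2, hS0⟩, rfl⟩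
  obtain ⟨Y1, ⟨Y2, C1, D1, C2, D2, hYsplit, hYa1, hYb1, hYa2, hYb2, hYS0⟩, hYcard⟩ :=
    Nat.find_spec hne
  refine ⟨Y1, Y2, C1, D1, C2, D2, ⟨hYsplit, hYa1, hYb1, hYa2, hYb2, hYS0⟩, ?_⟩
  rintro X1' X2' A1' B1' A2' B2' ⟨hsplit', ha1', hb1', ha2', hb2', hS0'⟩
  obtain ⟨hjoin, hma1, hmb1, hma2, hmb2, hmS0⟩ :=
    good_inter hYsplit hYa1 hYb1 hYa2 hYb2 hsplit' ha1' hb1' ha2' hb2' hYS0 hS0' hS0card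
  have hPint : P (Y1 ∩ X1') :=
    ⟨(Y1 ∩ X1')ᶜ, C1 ∩ X1', D1 ∩ X1', C2 ∪ A2', D2 ∪ B2',
      hjoin, hma1, hmb1, hma2, hmb2, hmS0⟩
  have hmin : Nat.find hne ≤ (Y1 ∩ X1').ncard := Nat.find_min' hne ⟨Y1 ∩ X1', hPint, rfl⟩
  have hle : Y1.ncard ≤ (Y1 ∩ X1').ncard := by omega
  have heq : Y1 ∩ X1' = Y1 :=
    Set.eq_of_subset_of_ncard_le Set.inter_subset_left hle (Set.toFinite _)
  intro x hx
  have : x ∈ Y1 ∩ X1' := heq.symm ▸ hx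
  exact this.2
end
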